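/- Let n ≥ 1 be odd, set m = (n-1)/2, let p ∈ {1, …, n}, and let V > 0. Then ∑_{σ ∈ S_n} ε(σ) · C_{σ,p}(V) = ((n-1)! / m!) · (2π² / ((n+2)²·V))^m, where the sum runs over all permutations σ of {1, …, n} and ε(σ) denotes the sign of σ. -/
import Mathlib


open Nat Finset

/-- The set `P_{σ,p}` of partitions of `{1,…,n} ∖ {p}` all of whose blocks have
cardinality at most 2 and are invariant under `σ`. -/
def Pstruct {n : ℕ} (p : Fin n) (σ : Equiv.Perm (Fin n)) :
    Finset (Finpartition (Finset.univ.erase p)) :=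
  Finset.univ.filter fun 𝔄 => ∀ 𝔞 ∈ 𝔄.parts, 𝔞.card ≤ 2 ∧ 𝔞.image σ = 𝔞

/-- The set `𝔄₁` of singleton blocks of `𝔄`. -/
def blocks1 {n : ℕ} {p : Fin n} (𝔄 : Finpartition (Finset.univ.erase p)) :
    Finset (Finset (Fin n)) :=
  𝔄.parts.filter fun 𝔞 => 𝔞.card = 1

/-- The set `𝔄₂` of two-element blocks of `𝔄` on which `σ` restricts to the identity. -/
def blocks2 {n : ℕ} {p : Fin n} (σ : Equiv.Perm (Fin n))
    (𝔄 : Finpartition (Finset.univ.erase p)) : Finset (Finset (Fin n)) :=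
  𝔄.parts.filter fun 𝔞 => 𝔞.card = 2 ∧ ∀ x ∈ 𝔞, σ x = x

/-- The set `𝔄₃` of two-element blocks of `𝔄` on which `σ` does not restrict to the
identity. -/
def blocks3 {n : ℕ} {p : Fin n} (σ : Equiv.Perm (Fin n))
    (𝔄 : Finpartition (Finset.univ.erase p)) : Finset (Finset (Fin n)) :=
  𝔄.parts.filter fun 𝔞 => 𝔞.card = 2 ∧ ¬ ∀ x ∈ 𝔞, σ x = x

/-- The combinatorial constant
`C_{σ,p}(V) = ∑_{𝔄 ∈ P_{σ,p}, |𝔄₁| even} (-1/(n+2))^{|𝔄|} (|𝔄₁|-1)!!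
(4π²/V)^{|𝔄|-|𝔄₁|/2} (1/(n+4))^{|𝔄₂|+|𝔄₃|}`. -/
noncomputable def Cconst {n : ℕ} (p : Fin n) (σ : Equiv.Perm (Fin n)) (V : ℝ) : ℝ :=
  ∑ 𝔄 ∈ (Pstruct p σ).filter (fun 𝔄 => Even (blocks1 𝔄).card),
    (-1 / ((n : ℝ) + 2)) ^ 𝔄.parts.card * (((blocks1 𝔄).card - 1)‼ : ℝ) *
      (4 * Real.pi ^ 2 / V) ^ (𝔄.parts.card - (blocks1 𝔄).card / 2) *
      (1 / ((n : ℝ) + 4)) ^ ((blocks2 σ 𝔄).card + (blocks3 σ 𝔄).card)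


lemma fact_two_mul (m : ℕ) : (2*m)! = (2*m-1)‼ * (2^m * m !) := by
  cases m with
  | zero => rfl
  | succ k =>
    have h1 : 2 * (k+1) = (2*k+1) + 1 := by ring
    have h2 : 2 * (k+1) - 1 = 2*k + 1 := by omega
    rw [h2, h1, Nat.factorial_eq_mul_doubleFactorial,
      show (2*k+1)+1 = 2*(k+1) by ring, Nat.doubleFactorial_two_mul]
    ring

lemma image_perm_self {n : ℕ} (π : Equiv.Perm (Fin n)) {s : Finset (Fin n)}
    (h : ∀ y ∈ s, π y ∈ s) : s.image π = s := by
  apply Finset.eq_of_subset_of_card_le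
  · exact Finset.image_subset_iff.2 h
  · rw [Finset.card_image_of_injective _ π.injective]


lemma blocks23_card {n : ℕ} {p : Fin n} (σ : Equiv.Perm (Fin n))
    (𝔄 : Finpartition ((Finset.univ : Finset (Fin n)).erase p)) :
    (blocks2 σ 𝔄).card + (blocks3 σ 𝔄).card
      = (𝔄.parts.filter fun 𝔞 => 𝔞.card = 2).card := by
  unfold blocks2 blocks3
  rw [← Finset.filter_filter (fun 𝔞 : Finset (Fin n) => 𝔞.card = 2)
        (fun 𝔞 => ∀ x ∈ 𝔞, σ x = x),
      ← Finset.filter_filter (fun 𝔞 : Finset (Fin n) => 𝔞.card = 2)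
        (fun 𝔞 => ¬ ∀ x ∈ 𝔞, σ x = x)]
  exact Finset.card_filter_add_card_filter_not _

lemma swap_image_block {n : ℕ} {p : Fin n}
    (𝔄 : Finpartition ((Finset.univ : Finset (Fin n)).erase p))
    {𝔞0 : Finset (Fin n)} (h0 : 𝔞0 ∈ 𝔄.parts) {a b : Fin n}
    (ha : a ∈ 𝔞0) (hb : b ∈ 𝔞0) {𝔞 : Finset (Fin n)} (h : 𝔞 ∈ 𝔄.parts) :
    𝔞.image (Equiv.swap a b) = 𝔞 := by
  by_cases he : 𝔞 = 𝔞0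
  · subst he
    apply image_perm_self
    intro y hy
    rcases eq_or_ne y a with rfl | hya
    · rw [Equiv.swap_apply_left]; exact hb
    rcases eq_or_ne y b with rfl | hyb
    · rw [Equiv.swap_apply_right]; exact ha
    · rwa [Equiv.swap_apply_of_ne_of_ne hya hyb]
  · have hdisj : Disjoint 𝔞 𝔞0 := 𝔄.disjoint h h0 he
    apply image_perm_self
    intro y hy
    have hya : y ≠ a := fun hh => (Finset.disjoint_left.1 hdisj hy) (hh ▸ ha)
    have hyb : y ≠ b := fun hh => (Finset.disjoint_left.1 hdisj hy) (hh ▸ hb)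
    rwa [Equiv.swap_apply_of_ne_of_ne hya hyb]

lemma signsum_zero {n : ℕ} {p : Fin n}
    (𝔄 : Finpartition ((Finset.univ : Finset (Fin n)).erase p))
    {𝔞0 : Finset (Fin n)} (h0 : 𝔞0 ∈ 𝔄.parts) {a b : Fin n}
    (ha : a ∈ 𝔞0) (hb : b ∈ 𝔞0) (hab : a ≠ b) :
    ∑ σ : Equiv.Perm (Fin n),
      (if ∀ 𝔞 ∈ 𝔄.parts, 𝔞.image σ = 𝔞 then ((Equiv.Perm.sign σ : ℤ) : ℝ) else 0) = 0 := by
  set τ := Equiv.swap a b with hτ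
  have key : ∀ σ : Equiv.Perm (Fin n),
      (∀ 𝔞 ∈ 𝔄.parts, 𝔞.image σ = 𝔞) → ∀ 𝔞 ∈ 𝔄.parts, 𝔞.image (σ * τ) = 𝔞 := by
    intro σ hσ 𝔞 h𝔞
    rw [Equiv.Perm.coe_mul, ← Finset.image_image,
      swap_image_block 𝔄 h0 ha hb h𝔞]
    exact hσ 𝔞 h𝔞
  apply Finset.sum_involution (fun σ _ => σ * τ)
  · intro σ _
    by_cases hσ : ∀ 𝔞 ∈ 𝔄.parts, 𝔞.image σ = 𝔞
    · rw [if_pos hσ, if_pos (key σ hσ), Equiv.Perm.sign_mul,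
        Equiv.Perm.sign_swap hab]
      push_cast
      ring
    · have hσ' : ¬ ∀ 𝔞 ∈ 𝔄.parts, 𝔞.image (σ * τ) = 𝔞 := by
        intro hc
        have := key (σ * τ) hc
        simp only [mul_assoc, hτ, Equiv.swap_mul_self, mul_one] at this
        exact hσ this
      rw [if_neg hσ, if_neg hσ', add_zero]
  · intro σ _ _ hc
    have : τ = 1 := by
      calc τ = σ⁻¹ * (σ * τ) := by group
        _ = σ⁻¹ * σ := by rw [hc]
        _ = 1 := by group
    have : τ a = a := by rw [this]; rfl
    rw [hτ, Equiv.swap_apply_left] at this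
    exact hab this.symm
  · intro σ _; exact Finset.mem_univ _
  · intro σ _
    simp [mul_assoc, hτ, Equiv.swap_mul_self]

lemma eq_bot_of_parts_card {n : ℕ} {p : Fin n}
    (𝔄 : Finpartition ((Finset.univ : Finset (Fin n)).erase p))
    (h : ∀ 𝔞 ∈ 𝔄.parts, 𝔞.card = 1) : 𝔄 = ⊥ := by
  apply Finpartition.ext
  ext t
  rw [Finpartition.mem_bot_iff]
  constructor
  · intro ht
    obtain ⟨x, rfl⟩ := Finset.card_eq_one.1 (h t ht)
    exact ⟨x, Finset.singleton_subset_iff.1 (𝔄.le ht), rfl⟩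
  · rintro ⟨x, hx, rfl⟩
    obtain ⟨𝔞, h𝔞, hx𝔞⟩ := 𝔄.exists_mem hx
    obtain ⟨y, rfl⟩ := Finset.card_eq_one.1 (h 𝔞 h𝔞)
    rw [Finset.mem_singleton.1 hx𝔞]
    exact h𝔞

lemma inv_bot_iff {n : ℕ} {p : Fin n} (σ : Equiv.Perm (Fin n)) :
    (∀ 𝔞 ∈ (⊥ : Finpartition ((Finset.univ : Finset (Fin n)).erase p)).parts,
      𝔞.image σ = 𝔞) ↔ σ = 1 := by
  constructor
  · intro h
    have hfix : ∀ x : Fin n, x ≠ p → σ x = x := by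
      intro x hx
      have hxs : x ∈ (Finset.univ : Finset (Fin n)).erase p :=
        Finset.mem_erase.2 ⟨hx, Finset.mem_univ x⟩
      have : ({x} : Finset (Fin n)) ∈
          (⊥ : Finpartition ((Finset.univ : Finset (Fin n)).erase p)).parts :=
        Finpartition.mem_bot_iff.2 ⟨x, hxs, rfl⟩
      have := h _ this
      rw [Finset.image_singleton] at this
      exact Finset.singleton_injective this
    have hp : σ p = p := by
      by_contra hc
      have h1 : σ (σ p) = σ p := hfix _ hc
      exact hc (σ.injective h1)
    ext x
    rcases eq_or_ne x p with rfl | hx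
    · simp [hp]
    · simp [hfix x hx]
  · rintro rfl
    simp

lemma signsum_bot {n : ℕ} {p : Fin n} :
    ∑ σ : Equiv.Perm (Fin n),
      (if ∀ 𝔞 ∈ (⊥ : Finpartition ((Finset.univ : Finset (Fin n)).erase p)).parts,
          𝔞.image σ = 𝔞 then ((Equiv.Perm.sign σ : ℤ) : ℝ) else 0) = 1 := by
  rw [Finset.sum_congr rfl (fun σ _ => by rw [if_congr (inv_bot_iff σ) rfl rfl]),
    Finset.sum_ite_eq' Finset.univ (1 : Equiv.Perm (Fin n))
      (fun σ => ((Equiv.Perm.sign σ : ℤ) : ℝ))]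
  simp


noncomputable def Tterm {n : ℕ} {p : Fin n}
    (𝔄 : Finpartition ((Finset.univ : Finset (Fin n)).erase p)) (V : ℝ) : ℝ :=
  (-1 / ((n : ℝ) + 2)) ^ 𝔄.parts.card * (((blocks1 𝔄).card - 1)‼ : ℝ) *
    (4 * Real.pi ^ 2 / V) ^ (𝔄.parts.card - (blocks1 𝔄).card / 2) *
    (1 / ((n : ℝ) + 4)) ^ ((𝔄.parts.filter fun 𝔞 => 𝔞.card = 2).card)

lemma Cconst_eq {n : ℕ} (p : Fin n) (σ : Equiv.Perm (Fin n)) (V : ℝ) :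
    Cconst p σ V = ∑ 𝔄 : Finpartition ((Finset.univ : Finset (Fin n)).erase p),
      if ((∀ 𝔞 ∈ 𝔄.parts, 𝔞.card ≤ 2 ∧ 𝔞.image σ = 𝔞) ∧ Even (blocks1 𝔄).card)
        then Tterm 𝔄 V else 0 := by
  unfold Cconst Pstruct
  rw [Finset.filter_filter, Finset.sum_filter]
  refine Finset.sum_congr rfl fun 𝔄 _ => ?_
  rw [blocks23_card]
  rfl


/-- For odd `n = 2m + 1`, `p ∈ {1,…,n}` and `V > 0`,
`∑_{σ ∈ S_n} ε(σ) C_{σ,p}(V) = ((n-1)!/m!) (2π²/((n+2)²V))^m`. -/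
theorem sum_sign_Cconst (n : ℕ) (hn : 1 ≤ n) (hodd : Odd n) (m : ℕ)
    (hm : n = 2 * m + 1) (p : Fin n) (V : ℝ) (hV : 0 < V) :
    ∑ σ : Equiv.Perm (Fin n), ((Equiv.Perm.sign σ : ℤ) : ℝ) * Cconst p σ V =
      (Nat.factorial (n - 1) : ℝ) / (Nat.factorial m) *
        (2 * Real.pi ^ 2 / (((n : ℝ) + 2) ^ 2 * V)) ^ m := by
  have hcard : ((Finset.univ : Finset (Fin n)).erase p).card = 2 * m := by
    rw [Finset.card_erase_of_mem (Finset.mem_univ p), Finset.card_univ, Fintype.card_fin]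
    omega
  -- Step 1: rearrange the double sum
  have step1 : ∑ σ : Equiv.Perm (Fin n), ((Equiv.Perm.sign σ : ℤ) : ℝ) * Cconst p σ V
      = ∑ 𝔄 : Finpartition ((Finset.univ : Finset (Fin n)).erase p),
          (∑ σ : Equiv.Perm (Fin n),
            if ((∀ 𝔞 ∈ 𝔄.parts, 𝔞.card ≤ 2 ∧ 𝔞.image σ = 𝔞) ∧ Even (blocks1 𝔄).card)
              then ((Equiv.Perm.sign σ : ℤ) : ℝ) else 0) * Tterm 𝔄 V := by
    rw [show ∑ 𝔄 : Finpartition ((Finset.univ : Finset (Fin n)).erase p),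
          (∑ σ : Equiv.Perm (Fin n),
            if ((∀ 𝔞 ∈ 𝔄.parts, 𝔞.card ≤ 2 ∧ 𝔞.image σ = 𝔞) ∧ Even (blocks1 𝔄).card)
              then ((Equiv.Perm.sign σ : ℤ) : ℝ) else 0) * Tterm 𝔄 V
        = ∑ 𝔄 : Finpartition ((Finset.univ : Finset (Fin n)).erase p),
          ∑ σ : Equiv.Perm (Fin n),
            (if ((∀ 𝔞 ∈ 𝔄.parts, 𝔞.card ≤ 2 ∧ 𝔞.image σ = 𝔞) ∧ Even (blocks1 𝔄).card)
              then ((Equiv.Perm.sign σ : ℤ) : ℝ) else 0) * Tterm 𝔄 V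
        from Finset.sum_congr rfl fun 𝔄 _ => Finset.sum_mul _ _ _]
    rw [Finset.sum_comm]
    refine Finset.sum_congr rfl fun σ _ => ?_
    rw [Cconst_eq, Finset.mul_sum]
    refine Finset.sum_congr rfl fun 𝔄 _ => ?_
    rw [mul_ite, mul_zero, ite_mul, zero_mul]
  rw [step1]
  have hzero : ∀ 𝔄 : Finpartition ((Finset.univ : Finset (Fin n)).erase p), 𝔄 ≠ ⊥ →
      (∑ σ : Equiv.Perm (Fin n),
        if ((∀ 𝔞 ∈ 𝔄.parts, 𝔞.card ≤ 2 ∧ 𝔞.image σ = 𝔞) ∧ Even (blocks1 𝔄).card)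
          then ((Equiv.Perm.sign σ : ℤ) : ℝ) else 0) = 0 := by
    intro 𝔄 h𝔄
    have hex : ∃ 𝔞0 ∈ 𝔄.parts, 𝔞0.card ≠ 1 := by
      by_contra h
      push_neg at h
      exact h𝔄 (eq_bot_of_parts_card 𝔄 (by simpa using h))
    obtain ⟨𝔞0, h𝔞0, hc0⟩ := hex
    have hlt : 1 < 𝔞0.card := by
      have := Finset.card_pos.2 (𝔄.nonempty_of_mem_parts h𝔞0)
      omega
    obtain ⟨a, ha, b, hb, hab⟩ := Finset.one_lt_card.1 hlt
    by_cases hP : (∀ 𝔞 ∈ 𝔄.parts, 𝔞.card ≤ 2) ∧ Even (blocks1 𝔄).card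
    · calc ∑ σ : Equiv.Perm (Fin n),
          (if ((∀ 𝔞 ∈ 𝔄.parts, 𝔞.card ≤ 2 ∧ 𝔞.image σ = 𝔞) ∧ Even (blocks1 𝔄).card)
            then ((Equiv.Perm.sign σ : ℤ) : ℝ) else 0)
          = ∑ σ : Equiv.Perm (Fin n),
            (if (∀ 𝔞 ∈ 𝔄.parts, 𝔞.image σ = 𝔞)
              then ((Equiv.Perm.sign σ : ℤ) : ℝ) else 0) := by
            refine Finset.sum_congr rfl fun σ _ => ?_
            refine if_congr ⟨fun h 𝔞 hh => (h.1 𝔞 hh).2,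
              fun h => ⟨fun 𝔞 hh => ⟨hP.1 𝔞 hh, h 𝔞 hh⟩, hP.2⟩⟩ rfl rfl
        _ = 0 := signsum_zero 𝔄 h𝔞0 ha hb hab
    · refine Finset.sum_eq_zero fun σ _ => ?_
      exact if_neg fun h => hP ⟨fun 𝔞 hh => (h.1 𝔞 hh).1, h.2⟩
  rw [Finset.sum_eq_single (⊥ : Finpartition ((Finset.univ : Finset (Fin n)).erase p))
    (fun 𝔄 _ h => by rw [hzero 𝔄 h, zero_mul])
    (fun h => absurd (Finset.mem_univ _) h)]
  -- evaluate at ⊥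
  have hcard1 : ∀ 𝔞 ∈ (⊥ : Finpartition ((Finset.univ : Finset (Fin n)).erase p)).parts,
      𝔞.card = 1 := by
    intro 𝔞 h𝔞
    obtain ⟨x, _, rfl⟩ := Finpartition.mem_bot_iff.1 h𝔞
    simp
  have hb1 : (blocks1 (⊥ : Finpartition ((Finset.univ : Finset (Fin n)).erase p))).card
      = 2 * m := by
    unfold blocks1
    rw [Finset.filter_true_of_mem hcard1, Finpartition.card_bot, hcard]
  have hsum1 : (∑ σ : Equiv.Perm (Fin n),
      if ((∀ 𝔞 ∈ (⊥ : Finpartition ((Finset.univ : Finset (Fin n)).erase p)).parts,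
          𝔞.card ≤ 2 ∧ 𝔞.image σ = 𝔞) ∧
          Even (blocks1 (⊥ : Finpartition ((Finset.univ : Finset (Fin n)).erase p))).card)
        then ((Equiv.Perm.sign σ : ℤ) : ℝ) else 0) = 1 := by
    rw [Finset.sum_congr rfl fun σ _ => if_congr
      ⟨fun h 𝔞 hh => (h.1 𝔞 hh).2,
       fun h => ⟨fun 𝔞 hh => ⟨by rw [hcard1 𝔞 hh]; omega, h 𝔞 hh⟩, by rw [hb1]; exact even_two_mul m⟩⟩
      rfl rfl]
    exact signsum_bot
  rw [hsum1, one_mul]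
  -- compute Tterm at ⊥
  have hb2 : ((⊥ : Finpartition ((Finset.univ : Finset (Fin n)).erase p)).parts.filter
      fun 𝔞 => 𝔞.card = 2) = ∅ := by
    refine Finset.filter_false_of_mem fun 𝔞 h𝔞 => ?_
    rw [hcard1 𝔞 h𝔞]
    omega
  unfold Tterm
  rw [hb1, hb2, Finpartition.card_bot, hcard, Finset.card_empty, pow_zero, mul_one,
    show 2*m - 2*m/2 = m by omega, show n - 1 = 2*m by omega, fact_two_mul m]
  have hn2 : ((n : ℝ) + 2) ≠ 0 := by positivity
  have hV' : V ≠ 0 := ne_of_gt hV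
  have hmf : (m ! : ℝ) ≠ 0 := Nat.cast_ne_zero.2 (Nat.factorial_ne_zero m)
  rw [pow_mul]
  push_cast
  rw [show (↑((2*m-1)‼) * ((2:ℝ)^m * ↑(m !)))/(↑(m !) : ℝ)
      = ↑((2*m-1)‼) * 2^m from by field_simp]
  have hbase : ((-1/((n:ℝ)+2))^2) * (4*Real.pi^2/V)
      = 2 * (2*Real.pi^2/(((n:ℝ)+2)^2*V)) := by
    field_simp
    ring
  calc ((-1/((n:ℝ)+2))^2)^m * ↑((2*m-1)‼) * (4*Real.pi^2/V)^m
      = ↑((2*m-1)‼) * (((-1/((n:ℝ)+2))^2) * (4*Real.pi^2/V))^m := by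
        rw [mul_pow]; ring
    _ = ↑((2*m-1)‼) * (2 * (2*Real.pi^2/(((n:ℝ)+2)^2*V)))^m := by rw [hbase]
    _ = ↑((2*m-1)‼) * 2^m * (2*Real.pi^2/(((n:ℝ)+2)^2*V))^m := by
        rw [mul_pow]; ring
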